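/- Let A_1, …, A_M be real n×n matrices with A := A_1 Hurwitz, D_j := A_j − A_1, and C_1, …, C_M real p×n matrices. Define Q_1 as the unique symmetric positive semidefinite solution of Aᵀ·Q_1 + Q_1·A + ∑_{j=1}^{M} C_jᵀ·C_j = 0 and, for k ≥ 2, Q_k as the unique symmetric positive semidefinite solution of Aᵀ·Q_k + Q_k·A + ∑_{j=1}^{M} D_jᵀ·Q_{k−1}·D_j = 0. If the series ∑_{k≥1} Q_k is summable with sum Q, then the range of Q equals the observability subspace O, i.e. the span of all columns of matrices of the form M_sᵀ ⋯ M_1ᵀ · C_{i_0}ᵀ, where s ≥ 0, each M_t ∈ {A_1, …, A_M}, i_0 ∈ {1,…,M}, and the empty product is the identity matrix. -/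

import Mathlib

open Matrix

/-- A real square matrix is Hurwitz if every eigenvalue of it, viewed as a complex
matrix, has strictly negative real part. -/
def IsHurwitz {n : ℕ} (A : Matrix (Fin n) (Fin n) ℝ) : Prop :=
  ∀ μ ∈ spectrum ℂ (A.map (algebraMap ℝ ℂ)), μ.re < 0

/-!
Write `Wᗮ` for the orthogonal complement with respect to the dot product and `A₀ := A ⟨0, hM⟩`.
As every `Q k` is positive semidefinite, `ker S = ⋂ₖ ker Q k`, and as `S` is symmetric,
`range S = (ker S)ᗮ`; so it suffices to show `⋂ₖ ker Q k = Oᗮ`. By construction `Oᗮ` is the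
largest subspace that is invariant under every `A j` and killed by every `C j`.

If `Q k x = 0` for all `k`, evaluating the `k`-th Lyapunov equation at `x` gives `xᵀ R x = 0` for
its positive semidefinite forcing term `R`, hence `C j x = 0`, `Q k (D j x) = 0` and then
`Q k (A₀ x) = 0`: the common kernel is one of the subspaces above, so it lies in `Oᗮ`.
Conversely, on an `A₀`-invariant subspace on which the forcing term vanishes the Lyapunov
equation reads `A₀ᵀ Q = Q (-A₀)`; since `A₀` is Hurwitz, `A₀ᵀ` and `-A₀` have coprime
characteristic polynomials and Sylvester's argument gives `Q = 0` there. Induction on `k` applies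
this to `Oᗮ`.
-/

open Polynomial

section DotOrthogonal

variable {ι κ : Type*} [Fintype ι] [Fintype κ]

def dotOrthogonal (W : Submodule ℝ (ι → ℝ)) : Submodule ℝ (ι → ℝ) :=
  LinearMap.BilinForm.orthogonal (dotProductBilin ℝ ℝ) W

lemma mem_dotOrthogonal {W : Submodule ℝ (ι → ℝ)} {x : ι → ℝ} :
    x ∈ dotOrthogonal W ↔ ∀ y ∈ W, y ⬝ᵥ x = 0 :=
  Iff.rfl

lemma dotOrthogonal_anti {V W : Submodule ℝ (ι → ℝ)} (h : V ≤ W) :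
    dotOrthogonal W ≤ dotOrthogonal V :=
  LinearMap.BilinForm.orthogonal_le h

lemma dotOrthogonal_dotOrthogonal (W : Submodule ℝ (ι → ℝ)) :
    dotOrthogonal (dotOrthogonal W) = W := by
  refine LinearMap.BilinForm.orthogonal_orthogonal ?_ ?_ W
  · exact ⟨fun x hx => dotProduct_self_eq_zero.mp (hx x),
      fun x hx => dotProduct_self_eq_zero.mp (hx x)⟩
  · intro x y h
    simpa [dotProduct_comm] using h

lemma dotOrthogonal_range_mulVecLin (M : Matrix ι κ ℝ) :
    dotOrthogonal (LinearMap.range M.mulVecLin) = LinearMap.ker Mᵀ.mulVecLin := by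
  ext x
  simp only [mem_dotOrthogonal, LinearMap.mem_range, mulVecLin_apply, LinearMap.mem_ker,
    forall_exists_index, forall_apply_eq_imp_iff]
  simp_rw [dotProduct_comm (M *ᵥ _), dotProduct_mulVec, ← mulVec_transpose]
  exact ⟨fun h => dotProduct_self_eq_zero.mp (by rw [dotProduct_comm]; exact h _),
    fun h u => by rw [h, zero_dotProduct]⟩

end DotOrthogonal

section Observability

variable {R ι κ J I : Type*} [CommSemiring R] [Fintype ι] [DecidableEq ι] [Fintype κ]

def observabilitySubspace (A : J → Matrix ι ι R) (C : I → Matrix κ ι R) : Submodule R (ι → R) :=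
  ⨆ (L : List (Matrix ι ι R)) (_ : ∀ X ∈ L, X ∈ Set.range A) (i : I),
    LinearMap.range (((L.map Matrix.transpose).prod * (C i)ᵀ).mulVecLin)

variable {A : J → Matrix ι ι R} {C : I → Matrix κ ι R}

lemma range_transpose_le_observabilitySubspace (i : I) :
    LinearMap.range (C i)ᵀ.mulVecLin ≤ observabilitySubspace A C := by
  rintro _ ⟨u, rfl⟩
  refine Submodule.mem_iSup_of_mem [] (Submodule.mem_iSup_of_mem (by simp) ?_)
  exact Submodule.mem_iSup_of_mem i ⟨u, by simp⟩

lemma transpose_mulVec_mem_observabilitySubspace (j : J) {y : ι → R}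
    (hy : y ∈ observabilitySubspace A C) : (A j)ᵀ *ᵥ y ∈ observabilitySubspace A C := by
  suffices observabilitySubspace A C ≤ (observabilitySubspace A C).comap (A j)ᵀ.mulVecLin from
    this hy
  refine iSup₂_le fun L hL => iSup_le fun i => ?_
  rintro _ ⟨u, rfl⟩
  have hL' : ∀ X ∈ A j :: L, X ∈ Set.range A := List.forall_mem_cons.2 ⟨⟨j, rfl⟩, hL⟩
  refine Submodule.mem_iSup_of_mem (A j :: L) (Submodule.mem_iSup_of_mem hL' ?_)
  refine Submodule.mem_iSup_of_mem i ⟨u, ?_⟩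
  simp only [mulVecLin_apply, List.map_cons, List.prod_cons, Matrix.mul_assoc, mulVec_mulVec]

lemma observabilitySubspace_le {V : Submodule R (ι → R)}
    (hC : ∀ i, LinearMap.range (C i)ᵀ.mulVecLin ≤ V) (hA : ∀ j, ∀ y ∈ V, (A j)ᵀ *ᵥ y ∈ V) :
    observabilitySubspace A C ≤ V := by
  refine iSup₂_le fun L hL => iSup_le fun i => ?_
  induction L with
  | nil => simpa using hC i
  | cons X L ih =>
    obtain ⟨j, rfl⟩ := hL X List.mem_cons_self
    rintro _ ⟨u, rfl⟩
    have hu := ih (fun Y hY => hL Y (List.mem_cons_of_mem _ hY)) ⟨u, rfl⟩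
    rw [mulVecLin_apply, List.map_cons, List.prod_cons, Matrix.mul_assoc, ← mulVec_mulVec]
    exact hA j _ hu

end Observability

section ObservabilityOrthogonal

variable {ι κ J I : Type*} [Fintype ι] [DecidableEq ι] [Fintype κ]
  {A : J → Matrix ι ι ℝ} {C : I → Matrix κ ι ℝ}

lemma mulVec_eq_zero_of_mem_dotOrthogonal_observabilitySubspace (i : I) {x : ι → ℝ}
    (hx : x ∈ dotOrthogonal (observabilitySubspace A C)) : C i *ᵥ x = 0 := by
  have := dotOrthogonal_anti (range_transpose_le_observabilitySubspace i) hx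
  rwa [dotOrthogonal_range_mulVecLin, transpose_transpose] at this

lemma mulVec_mem_dotOrthogonal_observabilitySubspace (j : J) {x : ι → ℝ}
    (hx : x ∈ dotOrthogonal (observabilitySubspace A C)) :
    A j *ᵥ x ∈ dotOrthogonal (observabilitySubspace A C) := by
  refine mem_dotOrthogonal.2 fun y hy => ?_
  rw [← dotProduct_transpose_mulVec, dotProduct_comm]
  exact mem_dotOrthogonal.1 hx _ (transpose_mulVec_mem_observabilitySubspace j hy)

lemma le_dotOrthogonal_observabilitySubspace {W : Submodule ℝ (ι → ℝ)}
    (hA : ∀ j, ∀ x ∈ W, A j *ᵥ x ∈ W) (hC : ∀ i, ∀ x ∈ W, C i *ᵥ x = 0) :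
    W ≤ dotOrthogonal (observabilitySubspace A C) := by
  have hle : observabilitySubspace A C ≤ dotOrthogonal W := by
    refine observabilitySubspace_le ?_ fun j y hy => mem_dotOrthogonal.2 fun x hx => ?_
    · rintro i _ ⟨u, rfl⟩
      refine mem_dotOrthogonal.2 fun x hx => ?_
      rw [mulVecLin_apply, dotProduct_transpose_mulVec, hC i x hx, dotProduct_zero]
    · rw [dotProduct_transpose_mulVec, dotProduct_comm]
      exact mem_dotOrthogonal.1 hy _ (hA j x hx)
  simpa only [dotOrthogonal_dotOrthogonal] using dotOrthogonal_anti hle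

end ObservabilityOrthogonal

section Intertwining

variable {R ι κ : Type*} [CommRing R] [Fintype ι] [Fintype κ] [DecidableEq ι] [DecidableEq κ]
  {A : Matrix ι ι R} {B : Matrix κ κ R} {X : Matrix κ ι R} {W : Submodule R (ι → R)}

lemma aeval_mulVec_mulVec_of_intertwines (hW : ∀ w ∈ W, A *ᵥ w ∈ W)
    (hX : ∀ w ∈ W, B *ᵥ (X *ᵥ w) = X *ᵥ (A *ᵥ w)) (q : R[X]) :
    ∀ w ∈ W, aeval B q *ᵥ (X *ᵥ w) = X *ᵥ (aeval A q *ᵥ w) := by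
  have hpow (k : ℕ) : ∀ w ∈ W, B ^ k *ᵥ (X *ᵥ w) = X *ᵥ (A ^ k *ᵥ w) := by
    induction k with
    | zero => simp
    | succ k ih =>
      intro w hw
      rw [pow_succ, pow_succ, ← mulVec_mulVec, ← mulVec_mulVec, hX w hw, ih _ (hW w hw)]
  induction q using Polynomial.induction_on' with
  | add p q hp hq =>
    intro w hw
    rw [map_add, map_add, add_mulVec, add_mulVec, hp w hw, hq w hw, mulVec_add]
  | monomial k c =>
    intro w hw
    simp only [aeval_monomial, Algebra.algebraMap_eq_smul_one, smul_mul_assoc, one_mul,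
      smul_mulVec, hpow k w hw, mulVec_smul]

/-- With `a * χ_B + b * χ_A = 1`, Cayley–Hamilton makes `b(B)` a left inverse of `χ_A(B)`,
while `χ_A(B) X = X χ_A(A) = 0` on `W`. -/
lemma mulVec_eq_zero_of_intertwines (hcop : IsCoprime B.charpoly A.charpoly)
    (hW : ∀ w ∈ W, A *ᵥ w ∈ W) (hX : ∀ w ∈ W, B *ᵥ (X *ᵥ w) = X *ᵥ (A *ᵥ w)) :
    ∀ w ∈ W, X *ᵥ w = 0 := by
  intro w hw
  obtain ⟨a, b, hab⟩ := hcop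
  have hinv : aeval B b * aeval B A.charpoly = 1 := by
    simpa [aeval_self_charpoly] using congrArg (aeval B) hab
  have hzero : aeval B A.charpoly *ᵥ (X *ᵥ w) = 0 := by
    rw [aeval_mulVec_mulVec_of_intertwines hW hX _ w hw, aeval_self_charpoly, zero_mulVec,
      mulVec_zero]
  rw [← one_mulVec (X *ᵥ w), ← hinv, ← mulVec_mulVec, hzero, mulVec_zero]

end Intertwining

section Hurwitz

variable {n : ℕ} {A : Matrix (Fin n) (Fin n) ℝ}

lemma mem_spectrum_map_iff_aeval_charpoly (μ : ℂ) :
    μ ∈ spectrum ℂ (A.map (algebraMap ℝ ℂ)) ↔ aeval μ A.charpoly = 0 := by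
  rw [mem_spectrum_iff_isRoot_charpoly, charpoly_map, IsRoot, eval_map_algebraMap]

lemma IsHurwitz.isCoprime_charpoly (hA : IsHurwitz A) : IsCoprime Aᵀ.charpoly (-A).charpoly := by
  rw [charpoly_transpose]
  refine (isCoprime_iff_aeval_ne_zero_of_isAlgClosed ℝ ℂ _ _).mpr fun μ => ?_
  by_contra! h
  rw [← mem_spectrum_map_iff_aeval_charpoly, ← mem_spectrum_map_iff_aeval_charpoly,
    Matrix.map_neg _ (map_neg _), ← spectrum.neg_eq, Set.mem_neg] at h
  have hμ := hA _ h.1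
  have hnegμ := hA _ h.2
  rw [Complex.neg_re] at hnegμ
  linarith

/-- On `W` the equation reads `Aᵀ P = P (-A)`, and `Aᵀ`, `-A` have disjoint spectra. -/
lemma IsHurwitz.mulVec_eq_zero_of_lyapunov (hA : IsHurwitz A) {P R : Matrix (Fin n) (Fin n) ℝ}
    (h : Aᵀ * P + P * A + R = 0) {W : Submodule ℝ (Fin n → ℝ)} (hW : ∀ w ∈ W, A *ᵥ w ∈ W)
    (hR : ∀ w ∈ W, R *ᵥ w = 0) : ∀ w ∈ W, P *ᵥ w = 0 := by
  refine mulVec_eq_zero_of_intertwines hA.isCoprime_charpoly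
    (fun w hw => by simpa only [neg_mulVec] using W.neg_mem (hW w hw)) fun w hw => ?_
  have hPw := congrArg (· *ᵥ w) h
  simp only [add_mulVec, ← mulVec_mulVec, hR w hw, zero_mulVec, add_zero] at hPw
  rw [neg_mulVec, mulVec_neg, eq_neg_of_add_eq_zero_left hPw]

end Hurwitz

section Lyapunov

variable {ι κ J : Type*} [Fintype ι] [Fintype κ] [Fintype J]

lemma dotProduct_mulVec_eq_zero_of_lyapunov {A P R : Matrix ι ι ℝ} (hP : P.IsSymm)
    (h : Aᵀ * P + P * A + R = 0) {x : ι → ℝ} (hx : P *ᵥ x = 0) : x ⬝ᵥ (R *ᵥ x) = 0 := by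
  have hPA : x ⬝ᵥ (P *ᵥ (A *ᵥ x)) = 0 := by
    rw [← hP.eq, dotProduct_transpose_mulVec, hx, dotProduct_zero]
  have hx' := congrArg (fun M => x ⬝ᵥ (M *ᵥ x)) h
  simpa only [add_mulVec, ← mulVec_mulVec, hx, hPA, mulVec_zero, dotProduct_add, dotProduct_zero,
    zero_add, zero_mulVec] using hx'

lemma mulVec_mulVec_eq_zero_of_lyapunov {A P R : Matrix ι ι ℝ} (h : Aᵀ * P + P * A + R = 0)
    {x : ι → ℝ} (hx : P *ᵥ x = 0) (hR : R *ᵥ x = 0) : P *ᵥ (A *ᵥ x) = 0 := by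
  have hx' := congrArg (· *ᵥ x) h
  simpa only [add_mulVec, ← mulVec_mulVec, hx, hR, mulVec_zero, zero_add, add_zero,
    zero_mulVec] using hx'

lemma Matrix.PosSemidef.mulVec_mulVec_eq_zero_of_sum {P : Matrix κ κ ℝ} (hP : P.PosSemidef)
    {G : J → Matrix κ ι ℝ} {x : ι → ℝ} (h : x ⬝ᵥ ((∑ j, (G j)ᵀ * P * G j) *ᵥ x) = 0) (j : J) :
    P *ᵥ (G j *ᵥ x) = 0 := by
  have hterm (j : J) : x ⬝ᵥ (((G j)ᵀ * P * G j) *ᵥ x) = (G j *ᵥ x) ⬝ᵥ (P *ᵥ (G j *ᵥ x)) := by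
    rw [Matrix.mul_assoc, ← mulVec_mulVec, dotProduct_transpose_mulVec, ← mulVec_mulVec,
      dotProduct_comm]
  have hnonneg (j : J) : 0 ≤ (G j *ᵥ x) ⬝ᵥ (P *ᵥ (G j *ᵥ x)) := by
    simpa using hP.dotProduct_mulVec_nonneg (G j *ᵥ x)
  rw [sum_mulVec, dotProduct_sum] at h
  simp_rw [hterm] at h
  rw [← hP.dotProduct_mulVec_zero_iff, star_trivial]
  exact (Finset.sum_eq_zero_iff_of_nonneg fun j _ => hnonneg j).1 h j (Finset.mem_univ j)

end Lyapunov

lemma HasSum.matrix_mulVec {R ι κ β : Type*} [NonUnitalNonAssocSemiring R] [TopologicalSpace R]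
    [IsTopologicalSemiring R] [Fintype κ] {Q : β → Matrix ι κ R} {S : Matrix ι κ R}
    (hS : HasSum Q S) (x : κ → R) : HasSum (fun k => Q k *ᵥ x) (S *ᵥ x) :=
  hS.map (mulVec.addMonoidHomLeft x) (Continuous.matrix_mulVec continuous_id continuous_const)

lemma HasSum.isSymm {R ι β : Type*} [AddCommMonoid R] [TopologicalSpace R] [T2Space R]
    {Q : β → Matrix ι ι R} {S : Matrix ι ι R} (hS : HasSum Q S) (hQ : ∀ k, (Q k).IsSymm) :
    S.IsSymm :=
  hS.matrix_transpose.unique (by simpa only [(hQ _).eq] using hS)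

lemma ker_mulVecLin_eq_iInf_of_hasSum {ι β : Type*} [Fintype ι] {Q : β → Matrix ι ι ℝ}
    {S : Matrix ι ι ℝ} (hQ : ∀ k, (Q k).PosSemidef) (hS : HasSum Q S) :
    LinearMap.ker S.mulVecLin = ⨅ k, LinearMap.ker (Q k).mulVecLin := by
  ext x
  simp only [LinearMap.mem_ker, mulVecLin_apply, Submodule.mem_iInf]
  constructor
  · intro hx k
    have hquad : HasSum (fun k => x ⬝ᵥ (Q k *ᵥ x)) 0 := by
      simpa [hx, Function.comp_def] using
        (hS.matrix_mulVec x).map (dotProductBilin ℝ ℝ x) (by fun_prop)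
    have hnonneg (k : β) : 0 ≤ x ⬝ᵥ (Q k *ᵥ x) := by simpa using (hQ k).dotProduct_mulVec_nonneg x
    rw [← (hQ k).dotProduct_mulVec_zero_iff, star_trivial]
    exact le_antisymm (le_hasSum hquad k fun j _ => hnonneg j) (hnonneg k)
  · intro hx
    have h := hS.matrix_mulVec x
    simp only [hx] at h
    exact h.unique hasSum_zero

section Cascade

variable {ι κ J : Type*} [Fintype ι] [Fintype κ] [Fintype J]

structure IsLyapunovCascade (A₀ : Matrix ι ι ℝ) (C : J → Matrix κ ι ℝ) (D : J → Matrix ι ι ℝ)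
    (Q : ℕ → Matrix ι ι ℝ) : Prop where
  zero : A₀ᵀ * Q 0 + Q 0 * A₀ + ∑ j, (C j)ᵀ * C j = 0
  succ (k : ℕ) : A₀ᵀ * Q (k + 1) + Q (k + 1) * A₀ + ∑ j, (D j)ᵀ * Q k * D j = 0

variable {A₀ : Matrix ι ι ℝ} {C : J → Matrix κ ι ℝ} {D : J → Matrix ι ι ℝ} {Q : ℕ → Matrix ι ι ℝ}

namespace IsLyapunovCascade

lemma C_mulVec_eq_zero (hQ : IsLyapunovCascade A₀ C D Q) (hQ₀ : (Q 0).PosSemidef)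
    {x : ι → ℝ} (hx : Q 0 *ᵥ x = 0) (j : J) : C j *ᵥ x = 0 := by
  classical
  have h := dotProduct_mulVec_eq_zero_of_lyapunov (isHermitian_iff_isSymm.1 hQ₀.1) hQ.zero hx
  simpa using PosSemidef.one.mulVec_mulVec_eq_zero_of_sum (G := C) (by simpa using h) j

lemma mulVec_D_mulVec_eq_zero (hQ : IsLyapunovCascade A₀ C D Q) {k : ℕ}
    (hQk : (Q k).PosSemidef) (hQk' : (Q (k + 1)).PosSemidef) {x : ι → ℝ}
    (hx : Q (k + 1) *ᵥ x = 0) (j : J) : Q k *ᵥ (D j *ᵥ x) = 0 :=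
  hQk.mulVec_mulVec_eq_zero_of_sum
    (dotProduct_mulVec_eq_zero_of_lyapunov (isHermitian_iff_isSymm.1 hQk'.1) (hQ.succ k) hx) j

lemma mulVec_A₀_mulVec_eq_zero (hQ : IsLyapunovCascade A₀ C D Q) (hpsd : ∀ k, (Q k).PosSemidef)
    {x : ι → ℝ} (hx : ∀ k, Q k *ᵥ x = 0) (k : ℕ) : Q k *ᵥ (A₀ *ᵥ x) = 0 := by
  cases k with
  | zero =>
    refine mulVec_mulVec_eq_zero_of_lyapunov hQ.zero (hx 0) ?_
    simp [sum_mulVec, ← mulVec_mulVec, hQ.C_mulVec_eq_zero (hpsd 0) (hx 0)]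
  | succ k =>
    refine mulVec_mulVec_eq_zero_of_lyapunov (hQ.succ k) (hx (k + 1)) ?_
    simp [sum_mulVec, ← mulVec_mulVec, Matrix.mul_assoc,
      hQ.mulVec_D_mulVec_eq_zero (hpsd k) (hpsd (k + 1)) (hx (k + 1))]

end IsLyapunovCascade

end Cascade

lemma IsLyapunovCascade.mulVec_eq_zero_of_invariant {n : ℕ} {κ J : Type*} [Fintype κ]
    [Fintype J] {A₀ : Matrix (Fin n) (Fin n) ℝ} {C : J → Matrix κ (Fin n) ℝ}
    {D : J → Matrix (Fin n) (Fin n) ℝ} {Q : ℕ → Matrix (Fin n) (Fin n) ℝ}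
    (hQ : IsLyapunovCascade A₀ C D Q) (hA : IsHurwitz A₀) {W : Submodule ℝ (Fin n → ℝ)}
    (hA₀W : ∀ x ∈ W, A₀ *ᵥ x ∈ W) (hDW : ∀ j, ∀ x ∈ W, D j *ᵥ x ∈ W)
    (hCW : ∀ j, ∀ x ∈ W, C j *ᵥ x = 0) (k : ℕ) : ∀ x ∈ W, Q k *ᵥ x = 0 := by
  induction k with
  | zero =>
    refine hA.mulVec_eq_zero_of_lyapunov hQ.zero hA₀W fun x hx => ?_
    simp [sum_mulVec, ← mulVec_mulVec, hCW _ x hx]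
  | succ k ih =>
    refine hA.mulVec_eq_zero_of_lyapunov (hQ.succ k) hA₀W fun x hx => ?_
    simp [sum_mulVec, ← mulVec_mulVec, Matrix.mul_assoc, ih _ (hDW _ x hx)]

lemma IsLyapunovCascade.iInf_ker_eq_dotOrthogonal_observabilitySubspace {n : ℕ}
    {κ J : Type*} [Fintype κ] [Fintype J] {A D : J → Matrix (Fin n) (Fin n) ℝ}
    {C : J → Matrix κ (Fin n) ℝ} {Q : ℕ → Matrix (Fin n) (Fin n) ℝ} {j₀ : J}
    (hQ : IsLyapunovCascade (A j₀) C D Q) (hpsd : ∀ k, (Q k).PosSemidef)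
    (hA : IsHurwitz (A j₀)) (hD : ∀ j, D j = A j - A j₀) :
    ⨅ k, LinearMap.ker (Q k).mulVecLin = dotOrthogonal (observabilitySubspace A C) := by
  have hK (x : Fin n → ℝ) : x ∈ ⨅ k, LinearMap.ker (Q k).mulVecLin ↔ ∀ k, Q k *ᵥ x = 0 := by
    simp only [Submodule.mem_iInf, LinearMap.mem_ker, mulVecLin_apply]
  refine le_antisymm (le_dotOrthogonal_observabilitySubspace (fun j x hx => ?_) fun i x hx => ?_)
    fun x hx => (hK x).2 fun k => ?_
  · rw [hK] at hx ⊢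
    intro k
    rw [← sub_add_cancel (A j) (A j₀), ← hD, add_mulVec, mulVec_add,
      hQ.mulVec_D_mulVec_eq_zero (hpsd k) (hpsd (k + 1)) (hx (k + 1)),
      hQ.mulVec_A₀_mulVec_eq_zero hpsd hx, add_zero]
  · exact hQ.C_mulVec_eq_zero (hpsd 0) ((hK x).1 hx 0) i
  · refine hQ.mulVec_eq_zero_of_invariant hA
      (fun x hx => mulVec_mem_dotOrthogonal_observabilitySubspace j₀ hx) (fun j x hx => ?_)
      (fun j x hx => mulVec_eq_zero_of_mem_dotOrthogonal_observabilitySubspace j hx) k x hx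
    rw [hD, sub_mulVec]
    exact sub_mem (mulVec_mem_dotOrthogonal_observabilitySubspace j hx)
      (mulVec_mem_dotOrthogonal_observabilitySubspace j₀ hx)

theorem range_observability_gramian_eq_observability_subspace
    {n p M : ℕ} (hM : 0 < M)
    (A : Fin M → Matrix (Fin n) (Fin n) ℝ)
    (C : Fin M → Matrix (Fin p) (Fin n) ℝ)
    (hA : IsHurwitz (A ⟨0, hM⟩))
    (D : Fin M → Matrix (Fin n) (Fin n) ℝ)
    (hD : ∀ j, D j = A j - A ⟨0, hM⟩)
    (Q : ℕ → Matrix (Fin n) (Fin n) ℝ)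
    -- `Q 0` plays the role of `Q₁`, etc.
    (hQ1psd : (Q 0).PosSemidef)
    (hQ1 : (A ⟨0, hM⟩)ᵀ * Q 0 + Q 0 * A ⟨0, hM⟩ + ∑ j : Fin M, (C j)ᵀ * C j = 0)
    (hQkpsd : ∀ k : ℕ, (Q (k + 1)).PosSemidef)
    (hQk : ∀ k : ℕ,
      (A ⟨0, hM⟩)ᵀ * Q (k + 1) + Q (k + 1) * A ⟨0, hM⟩ +
        ∑ j : Fin M, (D j)ᵀ * Q k * D j = 0)
    (S : Matrix (Fin n) (Fin n) ℝ) (hS : HasSum Q S)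
    -- the observability subspace
    (O : Submodule ℝ (Fin n → ℝ))
    (hO : O = ⨆ (L : List (Matrix (Fin n) (Fin n) ℝ))
        (_ : ∀ X ∈ L, X ∈ Set.range A) (i : Fin M),
        LinearMap.range (((L.map Matrix.transpose).prod * (C i)ᵀ).mulVecLin)) :
    LinearMap.range S.mulVecLin = O := by
  have hpsd : ∀ k, (Q k).PosSemidef := fun k => k.casesOn hQ1psd hQkpsd
  have hker : LinearMap.ker S.mulVecLin = dotOrthogonal (observabilitySubspace A C) :=
    (ker_mulVecLin_eq_iInf_of_hasSum hpsd hS).trans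
      (IsLyapunovCascade.iInf_ker_eq_dotOrthogonal_observabilitySubspace ⟨hQ1, hQk⟩ hpsd hA hD)
  have hS_symm : S.IsSymm := hS.isSymm fun k => isHermitian_iff_isSymm.1 (hpsd k).1
  calc LinearMap.range S.mulVecLin
      = dotOrthogonal (dotOrthogonal (LinearMap.range S.mulVecLin)) :=
        (dotOrthogonal_dotOrthogonal _).symm
    _ = dotOrthogonal (LinearMap.ker S.mulVecLin) := by
        rw [dotOrthogonal_range_mulVecLin, hS_symm.eq]
    _ = O := by rw [hker, dotOrthogonal_dotOrthogonal, hO]; rfl
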